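/- Under the hyperbolic-secant perturbation with bandwidth h > 0, the perturbed calibration function η satisfies sup_{s∈[0,1]} |η''(s)| ≤ (3/2)·tanh²(1/h)/h² ≤ (3/2)/h². -/

import Mathlib

/-!
Let `w_s` be the probability measure with density `kerW h s / D(s)` with respect to `μ` and
`T = tanh ((s - ·) / h)`. Since `∂ₛ sech ((s - u) / h) = -h⁻¹ T sech ((s - u) / h)` and
`∂ₛ (T sech ((s - u) / h)) = -h⁻¹ (2 T² - 1) sech ((s - u) / h)`, differentiating under the
integral twice gives `η'' = h⁻² (Cov_{w_s}(η₀, 2 T² - 1) - 2 E_{w_s}[T] Cov_{w_s}(η₀, T))`.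
For `A ∈ [0, 1]` and `B ∈ [b₁, b₂]`, `|Cov(A, B)| ≤ (b₂ - b₁) / 4`: with `a = E[A]` we have
`Cov(A, B) = E[(A - a)(B - (b₁ + b₂) / 2)]`, and by convexity `|A - a| ≤ a + A - 2 a A`, whose
expectation `2 a (1 - a)` is at most `1 / 2`. As `|T| ≤ τ = tanh (1 / h)` on `[0, 1]²`, this gives
`|η''| ≤ h⁻² (τ² / 2 + 2 τ · τ / 2)`.
-/

open Real MeasureTheory

/-- Sech kernel normalization constant `Z(u,h) = ∫₀¹ sech((t-u)/h) dt`. -/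
noncomputable def Zker (u h : ℝ) : ℝ := ∫ t in (0:ℝ)..1, 1 / Real.cosh ((t - u) / h)

/-- Unnormalized kernel weight `(1/Z(u,h))·sech((s-u)/h)`. -/
noncomputable def kerW (h s u : ℝ) : ℝ := (1 / Zker u h) * (1 / Real.cosh ((s - u) / h))

/-- Denominator `D(s) = ∫ (1/Z(u,h))·sech((s-u)/h) dμ(u)`. -/
noncomputable def Dfun (μ : Measure ℝ) (h s : ℝ) : ℝ := ∫ u, kerW h s u ∂μ

/-- Expectation of `A` under the reweighted measure `w_s` (density `kerW h s / D(s)` w.r.t. μ). -/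
noncomputable def wExp (μ : Measure ℝ) (h s : ℝ) (A : ℝ → ℝ) : ℝ :=
  (∫ u, A u * kerW h s u ∂μ) / Dfun μ h s

/-- Covariance of `A` and `B` under `w_s`. -/
noncomputable def wCov (μ : Measure ℝ) (h s : ℝ) (A B : ℝ → ℝ) : ℝ :=
  wExp μ h s (fun u => A u * B u) - wExp μ h s A * wExp μ h s B

open ProbabilityTheory Set

namespace Real

theorem hasDerivAt_tanh (x : ℝ) : HasDerivAt tanh (1 - tanh x ^ 2) x := by
  rw [show tanh = fun x => sinh x / cosh x from funext tanh_eq_sinh_div_cosh]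
  refine ((hasDerivAt_sinh x).div (hasDerivAt_cosh x) (cosh_pos x).ne').congr_deriv ?_
  field_simp

theorem differentiable_tanh : Differentiable ℝ tanh :=
  fun x => (hasDerivAt_tanh x).differentiableAt

theorem deriv_tanh : deriv tanh = fun x => 1 - tanh x ^ 2 :=
  funext fun x => (hasDerivAt_tanh x).deriv

theorem monotone_tanh : Monotone tanh :=
  monotone_of_deriv_nonneg differentiable_tanh fun x => by
    simpa [deriv_tanh] using (tanh_sq_lt_one x).le

theorem abs_tanh (x : ℝ) : |tanh x| = tanh |x| := by
  rcases le_total 0 x with hx | hx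
  · rw [abs_of_nonneg hx, abs_of_nonneg (by simpa using monotone_tanh hx)]
  · rw [abs_of_nonpos hx, abs_of_nonpos (by simpa using monotone_tanh hx), tanh_neg]

theorem abs_tanh_le_tanh {x y : ℝ} (h : |x| ≤ y) : |tanh x| ≤ tanh y :=
  abs_tanh x ▸ monotone_tanh h

theorem hasDerivAt_one_div_cosh (x : ℝ) :
    HasDerivAt (fun x => 1 / cosh x) (-(tanh x * (1 / cosh x))) x := by
  refine ((hasDerivAt_const x 1).div (hasDerivAt_cosh x) (cosh_pos x).ne').congr_deriv ?_
  rw [tanh_eq_sinh_div_cosh]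
  field_simp
  ring

end Real

theorem abs_sub_div_le_one_div {s u h : ℝ} (hh : 0 < h) (hs : s ∈ Icc (0:ℝ) 1)
    (hu : u ∈ Icc (0:ℝ) 1) : |(s - u) / h| ≤ 1 / h := by
  rw [abs_div, abs_of_pos hh]
  gcongr
  exact abs_le.2 ⟨by linarith [hs.1, hu.2], by linarith [hs.2, hu.1]⟩

theorem continuous_one_div_cosh_sub_div (u h : ℝ) :
    Continuous fun t => 1 / cosh ((t - u) / h) := by
  fun_prop (disch := intros; positivity)

theorem Zker_pos (u h : ℝ) : 0 < Zker u h :=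
  intervalIntegral.intervalIntegral_pos_of_pos_on
    ((continuous_one_div_cosh_sub_div u h).intervalIntegrable 0 1) (fun _ _ => by positivity)
    one_pos

theorem continuous_Zker (h : ℝ) : Continuous fun u => Zker u h :=
  intervalIntegral.continuous_parametric_intervalIntegral_of_continuous' (μ := volume)
    (f := fun u t => 1 / cosh ((t - u) / h)) (by fun_prop (disch := intros; positivity)) 0 1

theorem one_div_cosh_le_Zker {h u : ℝ} (hh : 0 < h) (hu : u ∈ Icc (0:ℝ) 1) :
    1 / cosh (1 / h) ≤ Zker u h := by
  have := intervalIntegral.integral_mono_on (μ := volume) zero_le_one intervalIntegrable_const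
    ((continuous_one_div_cosh_sub_div u h).intervalIntegrable 0 1)
    fun t ht => one_div_le_one_div_of_le (cosh_pos _) <| cosh_le_cosh.2 <| by
      rw [abs_of_pos (one_div_pos.2 hh)]; exact abs_sub_div_le_one_div hh ht hu
  simpa [Zker] using this

theorem kerW_pos (h s u : ℝ) : 0 < kerW h s u := by
  have := Zker_pos u h
  unfold kerW; positivity

theorem measurable_kerW (h s : ℝ) : Measurable (kerW h s) :=
  (measurable_const.div (continuous_Zker h).measurable).mul (by fun_prop)

theorem kerW_le_cosh {h u : ℝ} (hh : 0 < h) (hu : u ∈ Icc (0:ℝ) 1) (s : ℝ) :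
    kerW h s u ≤ cosh (1 / h) := by
  have hZ := one_div_cosh_le_Zker hh hu
  have hsech : 1 / cosh ((s - u) / h) ≤ 1 := by
    rw [div_le_one (cosh_pos _)]; exact one_le_cosh _
  calc kerW h s u ≤ 1 / Zker u h * 1 := by
        have := Zker_pos u h
        unfold kerW; gcongr
    _ ≤ cosh (1 / h) := by
        rw [mul_one, div_le_iff₀ (Zker_pos u h)]
        rwa [div_le_iff₀ (cosh_pos _), mul_comm] at hZ

theorem abs_sub_le_of_mem_unitInterval {x a : ℝ} (hx : x ∈ Icc (0:ℝ) 1) (ha : a ∈ Icc (0:ℝ) 1) :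
    |x - a| ≤ a + x - 2 * a * x := by
  rcases le_total a x with hax | hxa
  · rw [abs_of_nonneg (sub_nonneg.2 hax)]; nlinarith [ha.1, hx.2]
  · rw [abs_of_nonpos (sub_nonpos.2 hxa)]; nlinarith [ha.2, hx.1]

section Covariance

variable {Ω : Type*} [MeasurableSpace Ω] {ν : Measure Ω} [IsProbabilityMeasure ν]

theorem abs_covariance_le_of_mem_Icc {A B : Ω → ℝ} {b₁ b₂ : ℝ} (hA : AEMeasurable A ν)
    (hB : AEMeasurable B ν) (hA01 : ∀ᵐ ω ∂ν, A ω ∈ Icc (0:ℝ) 1)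
    (hBb : ∀ᵐ ω ∂ν, B ω ∈ Icc b₁ b₂) :
    |cov[A, B; ν]| ≤ (b₂ - b₁) / 4 := by
  have hBm : ∀ᵐ ω ∂ν, |B ω - (b₁ + b₂) / 2| ≤ (b₂ - b₁) / 2 :=
    hBb.mono fun ω h => abs_le.2 ⟨by linarith [h.1], by linarith [h.2]⟩
  have hr : 0 ≤ (b₂ - b₁) / 2 := by
    obtain ⟨ω, hω⟩ := hBm.exists; exact (abs_nonneg _).trans hω
  have hAL : MemLp A 2 ν := memLp_of_bounded hA01 hA.aestronglyMeasurable 2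
  have hBL : MemLp B 2 ν := memLp_of_bounded hBb hB.aestronglyMeasurable 2
  have hAi : Integrable A ν := hAL.integrable one_le_two
  set a := ν[A]
  have ha : a ∈ Icc (0:ℝ) 1 := by
    refine ⟨integral_nonneg_of_ae (hA01.mono fun ω h => h.1), ?_⟩
    simpa using integral_mono_ae hAi (integrable_const (1:ℝ))
      (hA01.mono fun ω h => h.2)
  have hAc : MemLp (fun ω => A ω - a) 2 ν := hAL.sub (memLp_const a)
  -- `A - a` has mean zero, so the constant subtracted from `B` is irrelevant.
  have centered : ∀ c, ∫ ω, (A ω - a) * (B ω - c) ∂ν = ∫ ω, (A ω - a) * B ω ∂ν := fun c => by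
    simp only [mul_sub]
    have hAB : Integrable (fun ω => (A ω - a) * B ω) ν := hAc.integrable_mul hBL
    rw [integral_sub hAB ((hAc.integrable one_le_two).mul_const c),
      integral_mul_const, integral_sub hAi (integrable_const a)]
    simp [a]
  have hcov : cov[A, B; ν] = ∫ ω, (A ω - a) * (B ω - (b₁ + b₂) / 2) ∂ν := by
    rw [covariance, centered, centered]
  calc |cov[A, B; ν]| ≤ ∫ ω, (b₂ - b₁) / 2 * (a + A ω - 2 * a * A ω) ∂ν := by
        rw [hcov]
        refine (abs_integral_le_integral_abs).trans (integral_mono_ae ?_ ?_ ?_)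
        · exact (hAc.integrable_mul (hBL.sub (memLp_const _))).abs
        · exact (((integrable_const a).add hAi).sub (hAi.const_mul (2 * a))).const_mul _
        · filter_upwards [hA01, hBm] with ω h1 h2
          rw [abs_mul, mul_comm ((b₂ - b₁) / 2)]
          exact mul_le_mul (abs_sub_le_of_mem_unitInterval h1 ha) h2 (abs_nonneg _)
            (by nlinarith [h1.1, h1.2, ha.1, ha.2])
    _ = (b₂ - b₁) / 2 * (2 * a * (1 - a)) := by
        have haA : Integrable (fun ω => a + A ω) ν := (integrable_const a).add hAi
        rw [integral_const_mul, integral_sub haA (hAi.const_mul _),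
          integral_add (integrable_const a) hAi, integral_const_mul]
        simp only [integral_const, probReal_univ, smul_eq_mul, one_mul]
        ring
    _ ≤ (b₂ - b₁) / 4 := by nlinarith [sq_nonneg (2 * a - 1)]

end Covariance

section Kernel

variable {μ : Measure ℝ} {h : ℝ}

theorem integrable_mul_kerW [IsFiniteMeasure μ] (hμ : ∀ᵐ u ∂μ, u ∈ Icc (0:ℝ) 1) (hh : 0 < h)
    {g : ℝ → ℝ} {C : ℝ} (hg : AEStronglyMeasurable g μ) (hgC : ∀ᵐ u ∂μ, |g u| ≤ C) (s : ℝ) :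
    Integrable (fun u => g u * kerW h s u) μ := by
  refine (integrable_const (C * cosh (1 / h))).mono'
    (hg.mul (measurable_kerW h s).aestronglyMeasurable) ?_
  filter_upwards [hμ, hgC] with u hu hgu
  rw [Real.norm_eq_abs, abs_mul, abs_of_pos (kerW_pos h s u)]
  exact mul_le_mul hgu (kerW_le_cosh hh hu s) (kerW_pos h s u).le ((abs_nonneg _).trans hgu)

theorem integrable_kerW [IsFiniteMeasure μ] (hμ : ∀ᵐ u ∂μ, u ∈ Icc (0:ℝ) 1) (hh : 0 < h)
    (s : ℝ) : Integrable (kerW h s) μ := by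
  simpa using integrable_mul_kerW hμ hh aestronglyMeasurable_const
    (ae_of_all μ fun _ => le_of_eq (abs_one (α := ℝ))) s

theorem Dfun_pos [IsProbabilityMeasure μ] (hμ : ∀ᵐ u ∂μ, u ∈ Icc (0:ℝ) 1) (hh : 0 < h)
    (s : ℝ) : 0 < Dfun μ h s := by
  rw [Dfun, integral_pos_iff_support_of_nonneg (fun u => (kerW_pos h s u).le)
    (integrable_kerW hμ hh s), Function.support_eq_univ fun u => (kerW_pos h s u).ne']
  simp

/-- The probability measure `w_s` of the paper. -/
noncomputable def kerMeasure (μ : Measure ℝ) (h s : ℝ) : Measure ℝ :=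
  μ.withDensity fun u => ENNReal.ofReal (kerW h s u / Dfun μ h s)

theorem kerMeasure_absolutelyContinuous (s : ℝ) : kerMeasure μ h s ≪ μ :=
  withDensity_absolutelyContinuous _ _

theorem integral_kerMeasure (f : ℝ → ℝ) (s : ℝ) :
    ∫ u, f u ∂(kerMeasure μ h s) = (∫ u, f u * kerW h s u ∂μ) / Dfun μ h s := by
  have hD : 0 ≤ Dfun μ h s := integral_nonneg fun u => (kerW_pos h s u).le
  rw [kerMeasure, integral_withDensity_eq_integral_toReal_smul
    ((measurable_kerW h s).div_const _).ennreal_ofReal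
    (ae_of_all _ fun _ => ENNReal.ofReal_lt_top), ← integral_div]
  congr 1 with u
  rw [ENNReal.toReal_ofReal (div_nonneg (kerW_pos h s u).le hD), smul_eq_mul]
  ring

theorem wExp_eq_integral_kerMeasure (A : ℝ → ℝ) (s : ℝ) :
    wExp μ h s A = ∫ u, A u ∂(kerMeasure μ h s) :=
  (integral_kerMeasure A s).symm

theorem isProbabilityMeasure_kerMeasure [IsProbabilityMeasure μ]
    (hμ : ∀ᵐ u ∂μ, u ∈ Icc (0:ℝ) 1) (hh : 0 < h) (s : ℝ) :
    IsProbabilityMeasure (kerMeasure μ h s) := by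
  constructor
  rw [kerMeasure, withDensity_apply _ MeasurableSet.univ, Measure.restrict_univ,
    ← ofReal_integral_eq_lintegral_ofReal ((integrable_kerW hμ hh s).div_const _)
      (ae_of_all _ fun u => div_nonneg (kerW_pos h s u).le (Dfun_pos hμ hh s).le),
    integral_div, ← Dfun, div_self (Dfun_pos hμ hh s).ne', ENNReal.ofReal_one]

theorem abs_wExp_le [IsProbabilityMeasure μ] (hμ : ∀ᵐ u ∂μ, u ∈ Icc (0:ℝ) 1) (hh : 0 < h)
    {B : ℝ → ℝ} {r : ℝ} (hB : ∀ᵐ u ∂μ, |B u| ≤ r) (s : ℝ) : |wExp μ h s B| ≤ r := by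
  have := isProbabilityMeasure_kerMeasure hμ hh s
  rw [wExp_eq_integral_kerMeasure]
  have hB' : ∀ᵐ u ∂kerMeasure μ h s, ‖B u‖ ≤ r := (kerMeasure_absolutelyContinuous s).ae_le hB
  simpa using norm_integral_le_of_norm_le_const hB'

theorem abs_wCov_le [IsProbabilityMeasure μ] (hμ : ∀ᵐ u ∂μ, u ∈ Icc (0:ℝ) 1) (hh : 0 < h)
    {A B : ℝ → ℝ} {b₁ b₂ : ℝ} (hA : AEMeasurable A μ) (hB : AEMeasurable B μ)
    (hA01 : ∀ᵐ u ∂μ, A u ∈ Icc (0:ℝ) 1) (hBb : ∀ᵐ u ∂μ, B u ∈ Icc b₁ b₂) (s : ℝ) :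
    |wCov μ h s A B| ≤ (b₂ - b₁) / 4 := by
  have := isProbabilityMeasure_kerMeasure hμ hh s
  have hac := kerMeasure_absolutelyContinuous (μ := μ) (h := h) s
  have hA01' := hac.ae_le hA01
  have hBb' := hac.ae_le hBb
  have hA' := hA.mono_ac hac
  have hB' := hB.mono_ac hac
  have hcov := abs_covariance_le_of_mem_Icc hA' hB' hA01' hBb'
  rw [covariance_eq_sub (memLp_of_bounded hA01' hA'.aestronglyMeasurable 2)
    (memLp_of_bounded hBb' hB'.aestronglyMeasurable 2)] at hcov
  simpa only [wCov, wExp_eq_integral_kerMeasure, Pi.mul_apply] using hcov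

end Kernel

section Moments

variable {μ : Measure ℝ} {h : ℝ}

noncomputable def kerMoment (μ : Measure ℝ) (h : ℝ) (ψ A : ℝ → ℝ) (s : ℝ) : ℝ :=
  ∫ u, A u * ψ ((s - u) / h) * kerW h s u ∂μ

theorem Dfun_eq_kerMoment : Dfun μ h = kerMoment μ h (fun _ => 1) (fun _ => 1) := by
  funext s; simp [Dfun, kerMoment]

theorem wExp_eq_kerMoment_div (A : ℝ → ℝ) (s : ℝ) :
    wExp μ h s A = kerMoment μ h (fun _ => 1) A s / Dfun μ h s := by
  simp [wExp, kerMoment]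

theorem kerMoment_neg (ψ A : ℝ → ℝ) (s : ℝ) :
    kerMoment μ h (fun x => -ψ x) A s = -kerMoment μ h ψ A s := by
  rw [kerMoment, kerMoment, ← integral_neg]
  congr 1 with u
  ring

theorem hasDerivAt_comp_mul_kerW {ψ : ℝ → ℝ} (hψ : Differentiable ℝ ψ) (u x : ℝ) :
    HasDerivAt (fun x => ψ ((x - u) / h) * kerW h x u)
      (h⁻¹ * ((deriv ψ ((x - u) / h) - ψ ((x - u) / h) * tanh ((x - u) / h)) * kerW h x u))
      x := by
  have hx : HasDerivAt (fun x => (x - u) / h) h⁻¹ x := by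
    simpa using ((hasDerivAt_id x).sub_const u).div_const h
  have hψx := (hψ _).hasDerivAt.comp x hx
  have hsech := ((hasDerivAt_one_div_cosh _).comp x hx).const_mul (1 / Zker u h)
  refine (hψx.mul hsech).congr_deriv ?_
  simp only [kerW, Function.comp_apply]
  ring

theorem hasDerivAt_kerMoment [IsFiniteMeasure μ] (hμ : ∀ᵐ u ∂μ, u ∈ Icc (0:ℝ) 1) (hh : 0 < h)
    {A : ℝ → ℝ} {C : ℝ} (hA : AEStronglyMeasurable A μ) (hAC : ∀ᵐ u ∂μ, |A u| ≤ C)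
    {ψ : ℝ → ℝ} {M M' : ℝ} (hψ : Differentiable ℝ ψ) (hψM : ∀ x, |ψ x| ≤ M)
    (hψM' : ∀ x, |deriv ψ x| ≤ M') (s : ℝ) :
    HasDerivAt (kerMoment μ h ψ A)
      (h⁻¹ * kerMoment μ h (fun x => deriv ψ x - ψ x * tanh x) A s) s := by
  have hM : 0 ≤ M := (abs_nonneg _).trans (hψM 0)
  have hχ : ∀ x, |deriv ψ x - ψ x * tanh x| ≤ M' + M := fun x =>
    calc |deriv ψ x - ψ x * tanh x| ≤ |deriv ψ x| + |ψ x| * |tanh x| := by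
          rw [← abs_mul]; exact abs_sub _ _
      _ ≤ M' + M * 1 := by gcongr; exacts [hψM' x, hψM x, (abs_tanh_lt_one x).le]
      _ = M' + M := by rw [mul_one]
  have hF : ∀ x, AEStronglyMeasurable (fun u => A u * ψ ((x - u) / h)) μ := fun x =>
    hA.mul (hψ.continuous.comp (by fun_prop)).aestronglyMeasurable
  have hFC : ∀ᵐ u ∂μ, |A u * ψ ((s - u) / h)| ≤ C * M := hAC.mono fun u hu => by
    rw [abs_mul]; exact mul_le_mul hu (hψM _) (abs_nonneg _) ((abs_nonneg _).trans hu)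
  have hχm : Measurable fun u => deriv ψ ((s - u) / h) - ψ ((s - u) / h) * tanh ((s - u) / h) :=
    ((measurable_deriv ψ).comp (by fun_prop)).sub ((hψ.continuous.comp (by fun_prop)).measurable.mul
      (differentiable_tanh.continuous.comp (by fun_prop)).measurable)
  have key := hasDerivAt_integral_of_dominated_loc_of_deriv_le (μ := μ) (x₀ := s)
    (F := fun x u => A u * ψ ((x - u) / h) * kerW h x u)
    (F' := fun x u => A u * (h⁻¹ * ((deriv ψ ((x - u) / h) - ψ ((x - u) / h) * tanh ((x - u) / h))
      * kerW h x u)))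
    (bound := fun _ => C * (h⁻¹ * ((M' + M) * cosh (1 / h)))) Filter.univ_mem
    (Filter.Eventually.of_forall fun x =>
      (hF x).mul (measurable_kerW h x).aestronglyMeasurable)
    (integrable_mul_kerW hμ hh (hF s) hFC s)
    (hA.mul ((hχm.mul (measurable_kerW h s)).const_mul h⁻¹).aestronglyMeasurable)
    ?_ (integrable_const _)
    (ae_of_all _ fun u x _ => by
      simpa only [mul_assoc] using (hasDerivAt_comp_mul_kerW hψ u x).const_mul (A u))
  · refine key.2.congr_deriv ?_
    rw [kerMoment, ← integral_const_mul]
    congr 1 with u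
    ring
  · filter_upwards [hμ, hAC] with u hu hAu x _
    rw [Real.norm_eq_abs, abs_mul, abs_mul, abs_mul, abs_of_pos (inv_pos.2 hh),
      abs_of_pos (kerW_pos h x u)]
    exact mul_le_mul hAu (mul_le_mul_of_nonneg_left (mul_le_mul (hχ _) (kerW_le_cosh hh hu x)
      (kerW_pos h x u).le ((abs_nonneg _).trans (hχ 0))) (inv_nonneg.2 hh.le))
      (mul_nonneg (inv_nonneg.2 hh.le) (mul_nonneg (abs_nonneg _) (kerW_pos h x u).le))
      ((abs_nonneg _).trans hAu)

end Moments

section SecondDerivative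

variable {μ : Measure ℝ} [IsProbabilityMeasure μ] {h : ℝ}

theorem hasDerivAt_kerMoment_one (hμ : ∀ᵐ u ∂μ, u ∈ Icc (0:ℝ) 1) (hh : 0 < h) {A : ℝ → ℝ}
    {C : ℝ} (hA : AEStronglyMeasurable A μ) (hAC : ∀ᵐ u ∂μ, |A u| ≤ C) (s : ℝ) :
    HasDerivAt (kerMoment μ h (fun _ => 1) A) (-(h⁻¹ * kerMoment μ h tanh A s)) s := by
  have := hasDerivAt_kerMoment hμ hh hA hAC (differentiable_const (1:ℝ)) (M := 1) (M' := 0)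
    (by simp) (by simp) s
  have hχ : (fun x => deriv (fun _ => (1:ℝ)) x - 1 * tanh x) = fun x => -tanh x := by
    funext x; simp
  rwa [hχ, kerMoment_neg, mul_neg] at this

theorem hasDerivAt_kerMoment_tanh (hμ : ∀ᵐ u ∂μ, u ∈ Icc (0:ℝ) 1) (hh : 0 < h) {A : ℝ → ℝ}
    {C : ℝ} (hA : AEStronglyMeasurable A μ) (hAC : ∀ᵐ u ∂μ, |A u| ≤ C) (s : ℝ) :
    HasDerivAt (kerMoment μ h tanh A)
      (-(h⁻¹ * kerMoment μ h (fun x => 2 * tanh x ^ 2 - 1) A s)) s := by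
  have := hasDerivAt_kerMoment hμ hh hA hAC differentiable_tanh (M := 1) (M' := 1)
    (fun x => (abs_tanh_lt_one x).le)
    (fun x => by
      rw [deriv_tanh]
      exact abs_le.2 ⟨by nlinarith [tanh_sq_lt_one x], by nlinarith [sq_nonneg (tanh x)]⟩) s
  have hχ : (fun x => deriv tanh x - tanh x * tanh x) = fun x => -(2 * tanh x ^ 2 - 1) := by
    funext x; rw [deriv_tanh]; ring
  rwa [hχ, kerMoment_neg, mul_neg] at this

theorem hasDerivAt_Dfun (hμ : ∀ᵐ u ∂μ, u ∈ Icc (0:ℝ) 1) (hh : 0 < h) (s : ℝ) :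
    HasDerivAt (Dfun μ h) (-(h⁻¹ * kerMoment μ h tanh (fun _ => 1) s)) s := by
  rw [Dfun_eq_kerMoment]
  exact hasDerivAt_kerMoment_one hμ hh aestronglyMeasurable_const
    (C := 1) (by simp) s

theorem deriv_wExp (hμ : ∀ᵐ u ∂μ, u ∈ Icc (0:ℝ) 1) (hh : 0 < h) {A : ℝ → ℝ} {C : ℝ}
    (hA : AEStronglyMeasurable A μ) (hAC : ∀ᵐ u ∂μ, |A u| ≤ C) :
    deriv (fun s => wExp μ h s A) = fun s => h⁻¹ *
      ((kerMoment μ h (fun _ => 1) A s * kerMoment μ h tanh (fun _ => 1) s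
        - kerMoment μ h tanh A s * Dfun μ h s) / Dfun μ h s ^ 2) := by
  funext s
  simp only [wExp_eq_kerMoment_div]
  refine ((hasDerivAt_kerMoment_one hμ hh hA hAC s).div (hasDerivAt_Dfun hμ hh s)
    (Dfun_pos hμ hh s).ne').deriv.trans ?_
  field_simp
  ring

theorem deriv_deriv_wExp (hμ : ∀ᵐ u ∂μ, u ∈ Icc (0:ℝ) 1) (hh : 0 < h) {A : ℝ → ℝ} {C : ℝ}
    (hA : AEStronglyMeasurable A μ) (hAC : ∀ᵐ u ∂μ, |A u| ≤ C) (s : ℝ) :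
    deriv (deriv fun s' => wExp μ h s' A) s =
      (h ^ 2)⁻¹ * (wCov μ h s A (fun u => 2 * tanh ((s - u) / h) ^ 2 - 1)
        - 2 * wExp μ h s (fun u => tanh ((s - u) / h))
          * wCov μ h s A (fun u => tanh ((s - u) / h))) := by
  have h1 : ∀ᵐ u ∂μ, |(fun _ : ℝ => (1:ℝ)) u| ≤ 1 := by simp
  set N := kerMoment μ h (fun _ => 1) A
  set P := kerMoment μ h tanh A
  set Q := kerMoment μ h tanh (fun _ => 1)
  set R := kerMoment μ h (fun x => 2 * tanh x ^ 2 - 1) A s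
  set S := kerMoment μ h (fun x => 2 * tanh x ^ 2 - 1) (fun _ => 1) s
  have hD := (Dfun_pos hμ hh s).ne'
  have hN' : HasDerivAt N (-(h⁻¹ * P s)) s := hasDerivAt_kerMoment_one hμ hh hA hAC s
  have hD' : HasDerivAt (Dfun μ h) (-(h⁻¹ * Q s)) s := hasDerivAt_Dfun hμ hh s
  have hP' : HasDerivAt P (-(h⁻¹ * R)) s := hasDerivAt_kerMoment_tanh hμ hh hA hAC s
  have hQ' : HasDerivAt Q (-(h⁻¹ * S)) s :=
    hasDerivAt_kerMoment_tanh hμ hh aestronglyMeasurable_const h1 s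
  have hE' : HasDerivAt (fun x => h⁻¹ * ((N x * Q x - P x * Dfun μ h x) / Dfun μ h x ^ 2)) _ s :=
    (((hN'.mul hQ').sub (hP'.mul hD')).div (hD'.pow 2) (pow_ne_zero 2 hD)).const_mul h⁻¹
  have e₁ : wExp μ h s (fun u => tanh ((s - u) / h)) = Q s / Dfun μ h s := by
    simp [wExp, Q, kerMoment]
  have e₂ : wExp μ h s (fun u => A u * tanh ((s - u) / h)) = P s / Dfun μ h s := rfl
  have e₃ : wExp μ h s (fun u => A u * (2 * tanh ((s - u) / h) ^ 2 - 1)) = R / Dfun μ h s :=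
    rfl
  have e₄ : wExp μ h s (fun u => 2 * tanh ((s - u) / h) ^ 2 - 1) = S / Dfun μ h s := by
    simp [wExp, S, kerMoment]
  rw [deriv_wExp hμ hh hA hAC, hE'.deriv, wCov, wCov, e₁, e₂, e₃, e₄, wExp_eq_kerMoment_div]
  simp only [Pi.pow_apply, Pi.mul_apply, Pi.sub_apply]
  field_simp
  ring

theorem abs_deriv_deriv_wExp_le (hμ : ∀ᵐ u ∂μ, u ∈ Icc (0:ℝ) 1) (hh : 0 < h) {A : ℝ → ℝ}
    (hA : AEMeasurable A μ) (hA01 : ∀ᵐ u ∂μ, A u ∈ Icc (0:ℝ) 1) {s : ℝ}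
    (hs : s ∈ Icc (0:ℝ) 1) :
    |deriv (deriv fun s' => wExp μ h s' A) s| ≤ 3 / 2 * tanh (1 / h) ^ 2 / h ^ 2 := by
  set τ := tanh (1 / h)
  have hτ : 0 ≤ τ := by rw [← tanh_zero]; exact monotone_tanh (one_div_pos.2 hh).le
  set T := fun u => tanh ((s - u) / h)
  have hT : ∀ᵐ u ∂μ, |T u| ≤ τ :=
    hμ.mono fun u hu => abs_tanh_le_tanh (abs_sub_div_le_one_div hh hs hu)
  have hTm : AEMeasurable T μ :=
    (differentiable_tanh.continuous.comp (by fun_prop)).measurable.aemeasurable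
  have hcov₁ : |wCov μ h s A (fun u => 2 * T u ^ 2 - 1)| ≤ τ ^ 2 / 2 := by
    have := abs_wCov_le hμ hh hA ((hTm.pow_const 2).const_mul 2 |>.sub_const 1) hA01
      (b₁ := -1) (b₂ := 2 * τ ^ 2 - 1) (hT.mono fun u hu =>
        ⟨by nlinarith [sq_nonneg (T u)], by nlinarith [sq_abs (T u), abs_nonneg (T u)]⟩) s
    linarith
  have hcov₂ : |wCov μ h s A T| ≤ τ / 2 := by
    have := abs_wCov_le hμ hh hA hTm hA01 (hT.mono fun u hu => abs_le.1 hu) s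
    linarith
  have hmean : |wExp μ h s T| ≤ τ := abs_wExp_le hμ hh hT s
  rw [deriv_deriv_wExp hμ hh hA.aestronglyMeasurable
    (hA01.mono fun u hu => abs_le.2 ⟨by linarith [hu.1], hu.2⟩) s, abs_mul,
    abs_of_pos (by positivity), inv_mul_eq_div]
  gcongr
  calc _ ≤ |wCov μ h s A (fun u => 2 * T u ^ 2 - 1)| + 2 * |wExp μ h s T| * |wCov μ h s A T| := by
        refine (abs_sub _ _).trans_eq ?_
        rw [abs_mul, abs_mul, abs_two]
    _ ≤ τ ^ 2 / 2 + 2 * τ * (τ / 2) := by gcongr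
    _ = 3 / 2 * τ ^ 2 := by ring

end SecondDerivative

theorem perturbed_calibration_second_deriv_bound
    (μ : Measure ℝ) [IsProbabilityMeasure μ] (hsupp : μ (Set.Icc (0:ℝ) 1) = 1)
    (η₀ : ℝ → ℝ) (hη₀meas : Measurable η₀) (hη₀b : ∀ u ∈ Set.Icc (0:ℝ) 1, η₀ u ∈ Set.Icc (0:ℝ) 1)
    (h : ℝ) (hh : 0 < h) :
    (∀ s ∈ Set.Icc (0:ℝ) 1,
        |deriv (deriv (fun s' => wExp μ h s' η₀)) s|
          ≤ (3 / 2) * Real.tanh (1 / h) ^ 2 / h ^ 2) ∧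
    (3 / 2) * Real.tanh (1 / h) ^ 2 / h ^ 2 ≤ (3 / 2) / h ^ 2 := by
  have hμ : ∀ᵐ u ∂μ, u ∈ Icc (0:ℝ) 1 := by
    rw [ae_iff_measure_eq (p := (· ∈ Icc (0:ℝ) 1)) measurableSet_Icc.nullMeasurableSet,
      ofPred_mem_eq, hsupp, measure_univ]
  exact ⟨fun s hs => abs_deriv_deriv_wExp_le hμ hh hη₀meas.aemeasurable (hμ.mono hη₀b) hs,
    by gcongr; nlinarith [tanh_sq_lt_one (1 / h)]⟩
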